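/- Let F be a class of weighted graphs and let m be a positive integer. If there exists a function f : (0,∞) → (0,∞) such that for every (G,φ) ∈ F and every ℓ > 0 the graph (G,φ)^ℓ has an m-coloring with weak diameter in (G,φ)^ℓ at most f(ℓ), then the asymptotic dimension of F is at most m − 1. -/

import Mathlib

open scoped ENNReal

/-- The length of a walk in an edge-weighted graph: the sum of the weights of its edges. -/
def walkLen {V : Type} {G : SimpleGraph V} (w : Sym2 V → ℝ) {x y : V} (p : G.Walk x y) : ℝ :=
  (p.edges.map w).sum

/-- The distance between two vertices of an edge-weighted graph: the infimum of the lengths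
of paths between them (`⊤` if there is no such path). -/
noncomputable def wDist {V : Type} (G : SimpleGraph V) (w : Sym2 V → ℝ) (x y : V) : ℝ≥0∞ :=
  ⨅ q : {q : G.Walk x y // q.IsPath}, ENNReal.ofReal (walkLen w q.1)

lemma wDist_comm {V : Type} (G : SimpleGraph V) (w : Sym2 V → ℝ) (x y : V) :
    wDist G w x y = wDist G w y x := by
  have key : ∀ a b : V, wDist G w a b ≤ wDist G w b a := by
    intro a b
    refine le_iInf fun q => ?_
    refine iInf_le_of_le ⟨q.1.reverse, q.2.reverse⟩ ?_
    simp [walkLen, List.sum_reverse]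
  exact le_antisymm (key x y) (key y x)

/-- The power graph: two distinct vertices are adjacent iff their weighted distance
is at most `r`. -/
noncomputable def powerGraph {V : Type} (G : SimpleGraph V) (w : Sym2 V → ℝ) (r : ℝ) :
    SimpleGraph V where
  Adj x y := x ≠ y ∧ wDist G w x y ≤ ENNReal.ofReal r
  symm := by
    constructor
    rintro x y ⟨hne, hle⟩
    exact ⟨hne.symm, by rwa [wDist_comm]⟩
  loopless := ⟨fun x h => h.1 rfl⟩

/-- The unit-length (hop) distance in an unweighted graph. -/
noncomputable def hopDist {V : Type} (L : SimpleGraph V) (x y : V) : ℝ≥0∞ :=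
  ⨅ q : L.Walk x y, (q.length : ℝ≥0∞)

/-- Same-colour adjacency within a vertex set `A`. -/
def colorGraph {V : Type} (K : SimpleGraph V) (A : Set V) {m : ℕ} (c : V → Fin m) :
    SimpleGraph V where
  Adj x y := K.Adj x y ∧ x ∈ A ∧ y ∈ A ∧ c x = c y
  symm := by
    constructor
    rintro x y ⟨h, hx, hy, hc⟩
    exact ⟨h.symm, hy, hx, hc.symm⟩
  loopless := ⟨fun x h => K.irrefl h.1⟩

/-- The colouring `c` of the subgraph of `K` induced on `A` has weak diameter, measured by the
hop distance of `L`, at most `N`: any two vertices of a monochromatic component of `K ↾ A` are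
at hop distance at most `N` in `L`. -/
def HasWeakDiamLE {V : Type} (K : SimpleGraph V) (A : Set V) (L : SimpleGraph V) {m : ℕ}
    (c : V → Fin m) (N : ℝ) : Prop :=
  ∀ x ∈ A, ∀ y ∈ A, (colorGraph K A c).Reachable x y → hopDist L x y ≤ ENNReal.ofReal N

/-- `nbhd G w r S`: vertices joined to `S` by a path of weighted length at most `r`. -/
def nbhd {V : Type} (G : SimpleGraph V) (w : Sym2 V → ℝ) (r : ℝ) (S : Set V) : Set V :=
  {v | ∃ s ∈ S, ∃ q : G.Walk v s, q.IsPath ∧ walkLen w q ≤ r}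

/-- Deleting a set of vertices (keeping them as isolated vertices of the ambient type). -/
def delVerts {V : Type} (G : SimpleGraph V) (Z : Set V) : SimpleGraph V where
  Adj x y := G.Adj x y ∧ x ∉ Z ∧ y ∉ Z
  symm := by
    constructor
    rintro x y ⟨h, hx, hy⟩
    exact ⟨h.symm, hy, hx⟩
  loopless := ⟨fun x h => G.irrefl h.1⟩

/-- A weighted graph: a finite simple graph together with positive edge weights. -/
structure WGraph : Type 1 where
  V : Type
  fin : Finite V
  G : SimpleGraph V
  w : Sym2 V → ℝ
  pos : ∀ e ∈ G.edgeSet, 0 < w e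

/-- The extended metric on the vertex set of a weighted graph. -/
noncomputable def WGraph.dist (W : WGraph) : W.V → W.V → ℝ≥0∞ := wDist W.G W.w

/-- All edge weights lie in `(0, ℓ]`. -/
def WGraph.IsBounded (W : WGraph) (ℓ : ℝ) : Prop := ∀ e ∈ W.G.edgeSet, W.w e ≤ ℓ

/-- `f` is an `n`-dimensional control function for the extended metric `d`. -/
def IsControlOn {X : Type} (d : X → X → ℝ≥0∞) (n : ℕ) (f : ℝ → ℝ) : Prop :=
  ∀ r : ℝ, 0 < r → ∃ U : Fin (n + 1) → Set (Set X),
    (∀ x : X, ∃ i, ∃ s ∈ U i, x ∈ s) ∧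
    (∀ i, ∀ s ∈ U i, ∀ t ∈ U i, s ≠ t → ∀ x ∈ s, ∀ y ∈ t, ENNReal.ofReal r < d x y) ∧
    (∀ i, ∀ s ∈ U i, ∀ x ∈ s, ∀ y ∈ s, d x y ≤ ENNReal.ofReal (f r))

/-- The asymptotic dimension of a class of weighted graphs is at most `n`. -/
def asdimLE (F : Set WGraph) (n : ℕ) : Prop :=
  ∃ f : ℝ → ℝ, (∀ x, 0 < x → 0 < f x) ∧ ∀ W ∈ F, IsControlOn W.dist n f

/-- The Assouad–Nagata dimension of a class of weighted graphs is at most `n`: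
some dilation is a common `n`-dimensional control function. -/
def ANdimLE (F : Set WGraph) (n : ℕ) : Prop :=
  ∃ (f : ℝ → ℝ) (c : ℝ), 0 < c ∧ (∀ x, 0 < x → 0 < f x) ∧ (∀ x, 0 < x → f x ≤ c * x) ∧
    ∀ W ∈ F, IsControlOn W.dist n f

/-- `H` is a minor of `G`: there are pairwise disjoint nonempty connected branch sets in `G`,
one for each vertex of `H`, with branch sets of adjacent vertices joined by an edge. -/
def IsMinorOf {α β : Type} (H : SimpleGraph β) (G : SimpleGraph α) : Prop :=
  ∃ B : β → Set α,
    (∀ h, (B h).Nonempty) ∧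
    (∀ h h', h ≠ h' → Disjoint (B h) (B h')) ∧
    (∀ h, (G.induce (B h)).Connected) ∧
    (∀ h h', H.Adj h h' → ∃ a ∈ B h, ∃ b ∈ B h', G.Adj a b)
/-- Vertices of the refinement `(G,w,r)`: original vertices plus, for each edge `e = xy` of `G`
and each end `x`, internal vertices `(x,y,i)`, `1 ≤ i ≤ ⌈w(e)/r⌉ - 1`, of the path `P_{e,x}`. -/
abbrev SubVert {V : Type} (G : SimpleGraph V) (w : Sym2 V → ℝ) (r : ℝ) : Type :=
  V ⊕ {p : V × V × ℕ // G.Adj p.1 p.2.1 ∧ 1 ≤ p.2.2 ∧ p.2.2 ≤ ⌈w s(p.1, p.2.1) / r⌉₊ - 1}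

def subRel {V : Type} (G : SimpleGraph V) (w : Sym2 V → ℝ) (r : ℝ) :
    SubVert G w r → SubVert G w r → Prop
  | Sum.inl x, Sum.inl y => G.Adj x y ∧ ⌈w s(x, y) / r⌉₊ = 1
  | Sum.inl x, Sum.inr q => (x = q.1.1 ∧ q.1.2.2 = 1) ∨
      (x = q.1.2.1 ∧ q.1.2.2 = ⌈w s(q.1.1, q.1.2.1) / r⌉₊ - 1)
  | Sum.inr _, Sum.inl _ => False
  | Sum.inr p, Sum.inr q => p.1.1 = q.1.1 ∧ p.1.2.1 = q.1.2.1 ∧ q.1.2.2 = p.1.2.2 + 1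

/-- The underlying graph of the refinement `(G,w,r)`: each edge `e = xy` is replaced by two
internally disjoint paths `P_{e,x}`, `P_{e,y}` between `x` and `y` with `⌈w(e)/r⌉` edges
(which degenerate to the single original edge when `⌈w(e)/r⌉ = 1`). -/
def subGraph {V : Type} (G : SimpleGraph V) (w : Sym2 V → ℝ) (r : ℝ) :
    SimpleGraph (SubVert G w r) :=
  SimpleGraph.fromRel (subRel G w r)

/-- The edge weights of the refinement `(G,w,r)`: in `P_{e,x}` the edge incident with `x` has
weight `w(e) - r·(⌈w(e)/r⌉ - 1)` and all other edges have weight `r`. -/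
noncomputable def subW {V : Type} (G : SimpleGraph V) (w : Sym2 V → ℝ) (r : ℝ) :
    Sym2 (SubVert G w r) → ℝ :=
  letI : DecidableEq V := Classical.decEq V
  Sym2.lift ⟨fun a b =>
    match a, b with
    | Sum.inl x, Sum.inl y => w s(x, y)
    | Sum.inl x, Sum.inr q =>
        if x = q.1.1 ∧ q.1.2.2 = 1 then
          w s(q.1.1, q.1.2.1) - r * ((⌈w s(q.1.1, q.1.2.1) / r⌉₊ - 1 : ℕ) : ℝ)
        else r
    | Sum.inr q, Sum.inl x =>
        if x = q.1.1 ∧ q.1.2.2 = 1 then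
          w s(q.1.1, q.1.2.1) - r * ((⌈w s(q.1.1, q.1.2.1) / r⌉₊ - 1 : ℕ) : ℝ)
        else r
    | Sum.inr _, Sum.inr _ => r, by
      rintro (x | p) (y | q)
      · show w s(x, y) = w s(y, x)
        rw [Sym2.eq_swap]
      · rfl
      · rfl
      · rfl⟩

/-- The power graph `(G,w)^r`, whose vertex set is the vertex set of the refinement `(G,w,r)`,
two distinct vertices being adjacent iff their distance in `(G,w,r)` is at most `r`. -/
noncomputable def subPower {V : Type} (G : SimpleGraph V) (w : Sym2 V → ℝ) (r : ℝ) :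
    SimpleGraph (SubVert G w r) :=
  powerGraph (subGraph G w r) (subW G w r) r

/-!
The monochromatic components of a colouring of `(G,φ)^r`, traced on `V(G)`, form the cover at
scale `r`. The refinement `(G,φ,r)` is isometric to `(G,φ)` on `V(G)`, so two vertices at
distance at most `r` are adjacent in the power graph and thus lie in the same monochromatic
component, while a walk of `N ≤ f(r)` steps in the power graph has length at most `N r`; hence
`r ↦ f(r) r` is a common control function. Of the two halves of the isometry, one lifts edges
of `G` to paths of the same length; the other uses that the distance to a fixed vertex, measured
through the ends of the subdivided edges, changes by at most the weight along each edge of the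
refinement.
-/

open SimpleGraph

section WeightedDistance

variable {V : Type} {G : SimpleGraph V} {w : Sym2 V → ℝ}

@[simp]
lemma walkLen_nil {x : V} : walkLen w (Walk.nil : G.Walk x x) = 0 := rfl

@[simp]
lemma walkLen_cons {x y z : V} (h : G.Adj x y) (p : G.Walk y z) :
    walkLen w (Walk.cons h p) = w s(x, y) + walkLen w p := by
  simp [walkLen]

lemma walkLen_append {x y z : V} (p : G.Walk x y) (q : G.Walk y z) :
    walkLen w (p.append q) = walkLen w p + walkLen w q := by
  simp [walkLen, Walk.edges_append]

@[simp]
lemma wDist_self (x : V) : wDist G w x x = 0 :=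
  nonpos_iff_eq_zero.1 <| (iInf_le _ ⟨Walk.nil, Walk.IsPath.nil⟩).trans_eq (by simp)

variable (hw : ∀ e ∈ G.edgeSet, 0 ≤ w e)
include hw

lemma walkLen_nonneg {x y : V} (p : G.Walk x y) : 0 ≤ walkLen w p :=
  List.sum_nonneg fun _ ha => by
    obtain ⟨e, he, rfl⟩ := List.mem_map.1 ha
    exact hw e (p.edges_subset_edgeSet he)

lemma wDist_le_walkLen {x y : V} (p : G.Walk x y) :
    wDist G w x y ≤ ENNReal.ofReal (walkLen w p) := by
  classical
  refine (iInf_le _ ⟨p.bypass, p.bypass_isPath⟩).trans (ENNReal.ofReal_le_ofReal ?_)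
  refine (p.edges_bypass_sublist_edges.map w).sum_le_sum fun _ ha => ?_
  obtain ⟨e, he, rfl⟩ := List.mem_map.1 ha
  exact hw e (p.edges_subset_edgeSet he)

lemma wDist_le_of_adj {x y : V} (h : G.Adj x y) : wDist G w x y ≤ ENNReal.ofReal (w s(x, y)) :=
  (wDist_le_walkLen hw (Walk.cons h Walk.nil)).trans_eq (by simp)

lemma wDist_triangle (x y z : V) : wDist G w x z ≤ wDist G w x y + wDist G w y z := by
  simp only [wDist, ENNReal.iInf_add, ENNReal.add_iInf]
  refine le_iInf₂ fun p q => ?_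
  rw [← ENNReal.ofReal_add (walkLen_nonneg hw _) (walkLen_nonneg hw _), ← walkLen_append]
  exact wDist_le_walkLen hw _

lemma le_wDist_add_of_forall_adj (P : V → ℝ≥0∞)
    (hP : ∀ a b, G.Adj a b → P a ≤ ENNReal.ofReal (w s(a, b)) + P b) (x y : V) :
    P x ≤ wDist G w x y + P y := by
  have along_walk : ∀ {a} (p : G.Walk a y), P a ≤ ENNReal.ofReal (walkLen w p) + P y := by
    intro a p
    induction p with
    | nil => simp
    | cons h p ih =>
      rw [walkLen_cons, ENNReal.ofReal_add (hw _ h) (walkLen_nonneg hw p), add_assoc]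
      exact (hP _ _ h).trans (by gcongr)
  rw [wDist, ENNReal.iInf_add]
  exact le_iInf fun p => along_walk p.1

lemma wDist_le_length_mul {r : ℝ} {x y : V} (q : (powerGraph G w r).Walk x y) :
    wDist G w x y ≤ q.length * ENNReal.ofReal r := by
  induction q with
  | nil => simp
  | cons h q ih =>
    calc _ ≤ _ := wDist_triangle hw _ _ _
      _ ≤ ENNReal.ofReal r + q.length * ENNReal.ofReal r := add_le_add h.2 ih
      _ = _ := by rw [Walk.length_cons]; push_cast; ring

lemma wDist_le_hopDist_mul {r : ℝ} (hr : 0 < r) (x y : V) :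
    wDist G w x y ≤ hopDist (powerGraph G w r) x y * ENNReal.ofReal r := by
  rw [hopDist, ENNReal.iInf_mul_of_ne (ENNReal.ofReal_pos.2 hr).ne' ENNReal.ofReal_ne_top]
  exact le_iInf (wDist_le_length_mul hw)

end WeightedDistance

section Subdivision

variable {V : Type} {G : SimpleGraph V} {w : Sym2 V → ℝ} {r : ℝ}

lemma mul_natCeil_div_sub_one_lt {a : ℝ} (ha : 0 < a) (hr : 0 < r) :
    r * ((⌈a / r⌉₊ - 1 : ℕ) : ℝ) < a := by
  have hceil : (⌈a / r⌉₊ : ℝ) < a / r + 1 := Nat.ceil_lt_add_one (by positivity)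
  have hone : 1 ≤ ⌈a / r⌉₊ := Nat.one_le_ceil_iff.2 (by positivity)
  calc r * ((⌈a / r⌉₊ - 1 : ℕ) : ℝ) = r * ((⌈a / r⌉₊ : ℝ) - 1) := by push_cast [hone]; ring
    _ < r * (a / r) := by gcongr; linarith
    _ = a := by field_simp

lemma subW_inl_inl (x y : V) : subW G w r s(Sum.inl x, Sum.inl y) = w s(x, y) := rfl

lemma subW_inr_inr (p q) : subW G w r s(Sum.inr p, Sum.inr q) = r := rfl

lemma subW_inl_inr_one {x z : V} (hq : G.Adj x z ∧ 1 ≤ 1 ∧ 1 ≤ ⌈w s(x, z) / r⌉₊ - 1) :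
    subW G w r s(Sum.inl x, Sum.inr ⟨(x, z, 1), hq⟩) =
      w s(x, z) - r * ((⌈w s(x, z) / r⌉₊ - 1 : ℕ) : ℝ) := by
  simp [subW]

lemma subW_inl_inr_of_ne {x x' z : V} {i : ℕ}
    (hq : G.Adj x' z ∧ 1 ≤ i ∧ i ≤ ⌈w s(x', z) / r⌉₊ - 1) (h : x ≠ x') :
    subW G w r s(Sum.inl x, Sum.inr ⟨(x', z, i), hq⟩) = r := by
  simp [subW, h]

/-- The distance to `y` from the point at distance `s` from `x` on the edge `xz`, the edge being
viewed as a segment of length `w s(x, z)` and the point leaving it through either end. -/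
noncomputable def edgePointDist (G : SimpleGraph V) (w : Sym2 V → ℝ) (x z : V) (s : ℝ) (y : V) :
    ℝ≥0∞ :=
  min (ENNReal.ofReal s + wDist G w x y) (ENNReal.ofReal (w s(x, z) - s) + wDist G w z y)

lemma edgePointDist_le_abs_sub_add (x z : V) (s t : ℝ) (y : V) :
    edgePointDist G w x z s y ≤ ENNReal.ofReal |s - t| + edgePointDist G w x z t y := by
  have ofReal_le {a b : ℝ} (h : a ≤ |s - t| + b) :
      ENNReal.ofReal a ≤ ENNReal.ofReal |s - t| + ENNReal.ofReal b :=
    (ENNReal.ofReal_le_ofReal h).trans ENNReal.ofReal_add_le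
  rw [edgePointDist, edgePointDist, ← min_add_add_left, ← add_assoc, ← add_assoc]
  gcongr
  · exact ofReal_le (by linarith [le_abs_self (s - t)])
  · exact ofReal_le (by linarith [neg_abs_le (s - t)])

section

variable (hw : ∀ e ∈ G.edgeSet, 0 ≤ w e)
include hw

lemma edgePointDist_zero {x z : V} (h : G.Adj x z) (y : V) :
    edgePointDist G w x z 0 y = wDist G w x y := by
  rw [edgePointDist, ENNReal.ofReal_zero, zero_add, sub_zero]
  exact min_eq_left <| (wDist_triangle hw x z y).trans (by gcongr; exact wDist_le_of_adj hw h)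

lemma edgePointDist_weight {x z : V} (h : G.Adj x z) (y : V) :
    edgePointDist G w x z (w s(x, z)) y = wDist G w z y := by
  rw [edgePointDist, sub_self, ENNReal.ofReal_zero, zero_add, Sym2.eq_swap]
  exact min_eq_right <| (wDist_triangle hw z x y).trans (by gcongr; exact wDist_le_of_adj hw h.symm)

end

/-- The internal vertex `(x, z, i)` of the refinement lies at distance
`w s(x, z) - r (⌈w s(x, z) / r⌉ - i)` from `x` along the edge `xz`. -/
noncomputable def subPot (G : SimpleGraph V) (w : Sym2 V → ℝ) (r : ℝ) (y : V) :
    SubVert G w r → ℝ≥0∞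
  | Sum.inl x => wDist G w x y
  | Sum.inr ⟨(x, z, i), _⟩ =>
      edgePointDist G w x z (w s(x, z) - r * ((⌈w s(x, z) / r⌉₊ - i : ℕ) : ℝ)) y

variable (hw : ∀ e ∈ G.edgeSet, 0 < w e) (hr : 0 < r)
include hw hr

lemma exists_edgePointDist_of_subRel {a b : SubVert G w r} (hab : subRel G w r a b) :
    ∃ x z s t, (∀ y, subPot G w r y a = edgePointDist G w x z s y ∧
      subPot G w r y b = edgePointDist G w x z t y) ∧ subW G w r s(a, b) = |s - t| := by
  have hw₀ : ∀ e ∈ G.edgeSet, 0 ≤ w e := fun e he => (hw e he).le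
  rcases a with x | ⟨⟨x, z, i⟩, hxz, hi, hiK⟩ <;> rcases b with z' | ⟨⟨x', z', j⟩, hxz', hj, hjK⟩
  · obtain ⟨hxz, -⟩ : G.Adj x z' ∧ _ := hab
    refine ⟨x, z', 0, w s(x, z'), fun y => ⟨(edgePointDist_zero hw₀ hxz y).symm,
      (edgePointDist_weight hw₀ hxz y).symm⟩, ?_⟩
    rw [zero_sub, abs_neg, abs_of_pos (hw _ hxz), subW_inl_inl]
  · simp only [subRel] at hab hxz' hj hjK
    rcases hab with ⟨rfl, rfl⟩ | ⟨rfl, rfl⟩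
    · refine ⟨x, z', 0, _, fun y => ⟨(edgePointDist_zero hw₀ hxz' y).symm, rfl⟩, ?_⟩
      rw [zero_sub, abs_neg, subW_inl_inr_one,
        abs_of_pos (sub_pos.2 (mul_natCeil_div_sub_one_lt (hw _ hxz') hr))]
    · refine ⟨x', x, w s(x', x), _, fun y => ⟨(edgePointDist_weight hw₀ hxz' y).symm, rfl⟩, ?_⟩
      have hlast : ⌈w s(x', x) / r⌉₊ - (⌈w s(x', x) / r⌉₊ - 1) = 1 := by omega
      rw [subW_inl_inr_of_ne _ hxz'.ne.symm, hlast, Nat.cast_one, mul_one, sub_sub_cancel,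
        abs_of_pos hr]
  · exact hab.elim
  · simp only [subRel] at hab hxz hi hiK
    obtain ⟨rfl, rfl, rfl⟩ := hab
    refine ⟨x, z, _, _, fun y => ⟨rfl, rfl⟩, ?_⟩
    have hsucc : ((⌈w s(x, z) / r⌉₊ - i : ℕ) : ℝ) = ((⌈w s(x, z) / r⌉₊ - (i + 1) : ℕ) : ℝ) + 1 := by
      rw [show ⌈w s(x, z) / r⌉₊ - i = ⌈w s(x, z) / r⌉₊ - (i + 1) + 1 by omega]
      push_cast; ring
    rw [subW_inr_inr, hsucc, show ∀ a b : ℝ, a - r * (b + 1) - (a - r * b) = -r by intros; ring,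
      abs_neg, abs_of_pos hr]

lemma exists_edgePointDist_of_adj {a b : SubVert G w r} (hab : (subGraph G w r).Adj a b) :
    ∃ x z s t, (∀ y, subPot G w r y a = edgePointDist G w x z s y ∧
      subPot G w r y b = edgePointDist G w x z t y) ∧ subW G w r s(a, b) = |s - t| := by
  rw [subGraph, fromRel_adj] at hab
  rcases hab.2 with hab | hba
  · exact exists_edgePointDist_of_subRel hw hr hab
  · obtain ⟨x, z, s, t, hpot, he⟩ := exists_edgePointDist_of_subRel hw hr hba
    exact ⟨x, z, t, s, fun y => (hpot y).symm, by rw [Sym2.eq_swap, he, abs_sub_comm]⟩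

lemma subW_nonneg : ∀ e ∈ (subGraph G w r).edgeSet, 0 ≤ subW G w r e := by
  rintro ⟨a, b⟩ hab
  obtain ⟨_, _, _, _, -, he⟩ := exists_edgePointDist_of_adj hw hr hab
  exact he ▸ abs_nonneg _

lemma subPot_le_add_of_adj (y : V) {a b : SubVert G w r} (hab : (subGraph G w r).Adj a b) :
    subPot G w r y a ≤ ENNReal.ofReal (subW G w r s(a, b)) + subPot G w r y b := by
  obtain ⟨x, z, s, t, hpot, he⟩ := exists_edgePointDist_of_adj hw hr hab
  rw [(hpot y).1, (hpot y).2, he]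
  exact edgePointDist_le_abs_sub_add x z s t y

lemma wDist_le_subDist (x y : V) :
    wDist G w x y ≤ wDist (subGraph G w r) (subW G w r) (Sum.inl x) (Sum.inl y) := by
  simpa [subPot] using le_wDist_add_of_forall_adj (subW_nonneg hw hr) (subPot G w r y)
    (fun _ _ => subPot_le_add_of_adj hw hr y) (Sum.inl x) (Sum.inl y)

lemma subDist_inr_le {x z : V} {i : ℕ} (hq : G.Adj x z ∧ 1 ≤ i ∧ i ≤ ⌈w s(x, z) / r⌉₊ - 1) :
    wDist (subGraph G w r) (subW G w r) (Sum.inr ⟨(x, z, i), hq⟩) (Sum.inl z) ≤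
      ENNReal.ofReal (r * ((⌈w s(x, z) / r⌉₊ - i : ℕ) : ℝ)) := by
  have hw' := subW_nonneg hw hr
  obtain ⟨n, hn⟩ : ∃ n, ⌈w s(x, z) / r⌉₊ - 1 - i = n := ⟨_, rfl⟩
  induction n generalizing i with
  | zero =>
    have hadj : (subGraph G w r).Adj (Sum.inr ⟨(x, z, i), hq⟩) (Sum.inl z) := by
      rw [subGraph, fromRel_adj]
      exact ⟨Sum.inr_ne_inl, Or.inr (Or.inr ⟨rfl, show i = ⌈w s(x, z) / r⌉₊ - 1 by omega⟩)⟩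
    refine (wDist_le_of_adj hw' hadj).trans_eq ?_
    rw [Sym2.eq_swap, subW_inl_inr_of_ne _ hq.1.ne.symm,
      show ⌈w s(x, z) / r⌉₊ - i = 1 by omega, Nat.cast_one, mul_one]
  | succ n ih =>
    have hq' : G.Adj x z ∧ 1 ≤ i + 1 ∧ i + 1 ≤ ⌈w s(x, z) / r⌉₊ - 1 := ⟨hq.1, by omega, by omega⟩
    have hadj : (subGraph G w r).Adj (Sum.inr ⟨(x, z, i), hq⟩) (Sum.inr ⟨(x, z, i + 1), hq'⟩) := by
      rw [subGraph, fromRel_adj]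
      exact ⟨by simp, Or.inl ⟨rfl, rfl, rfl⟩⟩
    calc _ ≤ _ := wDist_triangle hw' _ (Sum.inr ⟨(x, z, i + 1), hq'⟩) _
      _ ≤ ENNReal.ofReal r + ENNReal.ofReal (r * ((⌈w s(x, z) / r⌉₊ - (i + 1) : ℕ) : ℝ)) :=
        add_le_add (wDist_le_of_adj hw' hadj) (ih hq' (by omega))
      _ = _ := by
        rw [← ENNReal.ofReal_add hr.le (by positivity),
          show ⌈w s(x, z) / r⌉₊ - i = ⌈w s(x, z) / r⌉₊ - (i + 1) + 1 by omega]
        push_cast; ring_nf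

lemma subDist_le_of_adj {x z : V} (h : G.Adj x z) :
    wDist (subGraph G w r) (subW G w r) (Sum.inl x) (Sum.inl z) ≤ ENNReal.ofReal (w s(x, z)) := by
  have hw' := subW_nonneg hw hr
  have hone : 1 ≤ ⌈w s(x, z) / r⌉₊ := Nat.one_le_ceil_iff.2 (div_pos (hw _ h) hr)
  rcases hone.eq_or_lt with hK | hK
  · refine wDist_le_of_adj hw' ?_
    rw [subGraph, fromRel_adj]
    exact ⟨by simpa using h.ne, Or.inl ⟨h, hK.symm⟩⟩
  · have hq : G.Adj x z ∧ 1 ≤ 1 ∧ 1 ≤ ⌈w s(x, z) / r⌉₊ - 1 := ⟨h, le_rfl, by omega⟩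
    have hadj : (subGraph G w r).Adj (Sum.inl x) (Sum.inr ⟨(x, z, 1), hq⟩) := by
      rw [subGraph, fromRel_adj]
      exact ⟨Sum.inl_ne_inr, Or.inl (Or.inl ⟨rfl, rfl⟩)⟩
    calc _ ≤ _ := wDist_triangle hw' _ (Sum.inr ⟨(x, z, 1), hq⟩) _
      _ ≤ _ := add_le_add (wDist_le_of_adj hw' hadj) (subDist_inr_le hw hr hq)
      _ = _ := by
        rw [subW_inl_inr_one, ← ENNReal.ofReal_add
          (sub_pos.2 (mul_natCeil_div_sub_one_lt (hw _ h) hr)).le (by positivity), sub_add_cancel]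

lemma subDist_inl (x y : V) :
    wDist (subGraph G w r) (subW G w r) (Sum.inl x) (Sum.inl y) = wDist G w x y := by
  refine le_antisymm ?_ (wDist_le_subDist hw hr x y)
  simpa using le_wDist_add_of_forall_adj (fun e he => (hw e he).le)
    (fun v => wDist (subGraph G w r) (subW G w r) (Sum.inl v) (Sum.inl y))
    (fun a b h => (wDist_triangle (subW_nonneg hw hr) _ _ _).trans
      (by gcongr; exact subDist_le_of_adj hw hr h)) x y

lemma subPower_adj_inl_iff {x y : V} :
    (subPower G w r).Adj (Sum.inl x) (Sum.inl y) ↔ x ≠ y ∧ wDist G w x y ≤ ENNReal.ofReal r := by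
  change Sum.inl x ≠ Sum.inl y ∧ _ ↔ _
  rw [subDist_inl hw hr, Sum.inl_injective.ne_iff]

end Subdivision

lemma colorGraph_reachable_color_eq {V : Type} {K : SimpleGraph V} {A : Set V} {m : ℕ}
    {c : V → Fin m} {a b : V} (h : (colorGraph K A c).Reachable a b) : c a = c b := by
  obtain ⟨p⟩ := h
  induction p with
  | nil => rfl
  | cons hadj _ ih => exact hadj.2.2.2.trans ih

lemma exists_cover_of_coloring {X Y : Type} (d : X → X → ℝ≥0∞) (ι : X → Y) (K : SimpleGraph Y)
    {m : ℕ} (c : Y → Fin m) (r D : ℝ)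
    (hadj : ∀ x y, x ≠ y → d x y ≤ ENNReal.ofReal r → K.Adj (ι x) (ι y))
    (hdiam : ∀ x y, (colorGraph K Set.univ c).Reachable (ι x) (ι y) → d x y ≤ ENNReal.ofReal D) :
    ∃ U : Fin m → Set (Set X),
      (∀ x : X, ∃ i, ∃ s ∈ U i, x ∈ s) ∧
      (∀ i, ∀ s ∈ U i, ∀ t ∈ U i, s ≠ t → ∀ x ∈ s, ∀ y ∈ t, ENNReal.ofReal r < d x y) ∧
      (∀ i, ∀ s ∈ U i, ∀ x ∈ s, ∀ y ∈ s, d x y ≤ ENNReal.ofReal D) := by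
  set H := colorGraph K Set.univ c
  refine ⟨fun i => (fun v => {u | H.Reachable (ι u) v}) '' {v | c v = i},
    fun x => ⟨c (ι x), _, ⟨ι x, rfl, rfl⟩, Reachable.refl _⟩, ?_, ?_⟩
  · rintro i - ⟨v, hv, rfl⟩ - ⟨v', hv', rfl⟩ hne x (hx : H.Reachable _ v) y
      (hy : H.Reachable _ v')
    refine lt_of_not_ge fun hle => hne ?_
    have hxy : H.Reachable (ι x) (ι y) := by
      rcases eq_or_ne x y with rfl | hxy
      · rfl
      · refine Adj.reachable ⟨hadj x y hxy hle, trivial, trivial, ?_⟩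
        rw [colorGraph_reachable_color_eq hx, colorGraph_reachable_color_eq hy, hv, hv']
    have hvv' : H.Reachable v v' := hx.symm.trans (hxy.trans hy)
    ext u
    exact ⟨fun hu => hu.trans hvv', fun hu => hu.trans hvv'.symm⟩
  · rintro i - ⟨v, -, rfl⟩ x (hx : H.Reachable _ v) y (hy : H.Reachable _ v)
    exact hdiam x y (hx.trans hy.symm)

/-- Theorem (Lemma `weight_wd_ad_1`): if there is a function `f` such that for every
`(G,φ) ∈ F` and every `ℓ > 0` the graph `(G,φ)^ℓ` has an `m`-colouring with weak diameter in
`(G,φ)^ℓ` at most `f(ℓ)`, then the asymptotic dimension of `F` is at most `m - 1`. -/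
theorem weight_wd_ad_one (F : Set WGraph) (m : ℕ) (hm : 0 < m)
    (h : ∃ f : ℝ → ℝ, (∀ x, 0 < x → 0 < f x) ∧
      ∀ W ∈ F, ∀ ℓ : ℝ, 0 < ℓ →
        ∃ c : SubVert W.G W.w ℓ → Fin m,
          HasWeakDiamLE (subPower W.G W.w ℓ) Set.univ (subPower W.G W.w ℓ) c (f ℓ)) :
    asdimLE F (m - 1) := by
  obtain ⟨f, hf, hcol⟩ := h
  obtain ⟨n, rfl⟩ : ∃ n, m = n + 1 := ⟨m - 1, by omega⟩
  rw [Nat.add_sub_cancel]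
  refine ⟨fun r => f r * r, fun r hr => mul_pos (hf r hr) hr, fun W hW r hr => ?_⟩
  obtain ⟨c, hc⟩ := hcol W hW r hr
  refine exists_cover_of_coloring W.dist Sum.inl (subPower W.G W.w r) c r (f r * r)
    (fun x y hxy hd => (subPower_adj_inl_iff W.pos hr).2 ⟨hxy, hd⟩) fun x y hxy => ?_
  calc W.dist x y
      = wDist (subGraph W.G W.w r) (subW W.G W.w r) (Sum.inl x) (Sum.inl y) :=
        (subDist_inl W.pos hr x y).symm
    _ ≤ hopDist (subPower W.G W.w r) (Sum.inl x) (Sum.inl y) * ENNReal.ofReal r :=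
        wDist_le_hopDist_mul (subW_nonneg W.pos hr) hr _ _
    _ ≤ ENNReal.ofReal (f r) * ENNReal.ofReal r := by
        gcongr
        exact hc _ trivial _ trivial hxy
    _ = ENNReal.ofReal (f r * r) := (ENNReal.ofReal_mul (hf r hr).le).symm
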